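/- arXiv:2411.01495 — 4 statements merged into one kernel-verified Lean document; each statement's English description precedes it below -/
import Mathlib

section
/- Let b ∈ (0,1), let g : ℝ → (0,1) be C³, and let F : ℝ → ℝ be given by F(x) = x + b − g(x). Assume conditions (A) and (B). Then for every x ∈ ℝ there exists m ∈ ℕ such that the m-th iterate F^m(x) lies in [b−1, b]; that is, the invariant interval [b−1, b] absorbs the trajectory of every point of ℝ. -/
theorem trajectory_absorbed
    (b : ℝ) (hb : b ∈ Set.Ioo (0:ℝ) 1)
    (g : ℝ → ℝ) (hg : ContDiff ℝ 3 g) (hg01 : ∀ x, g x ∈ Set.Ioo (0:ℝ) 1)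
    (F : ℝ → ℝ) (hF : ∀ x, F x = x + b - g x)
    (ym yp : ℝ) (hym : b - 1 < ym) (hym0 : ym < 0) (hyp0 : 0 < yp) (hyp : yp < b)
    (hA1 : ∀ x, (x < ym ∨ yp < x) → 0 < deriv g x ∧ deriv g x < 1)
    (hA2 : deriv g ym = 1 ∧ deriv g yp = 1)
    (hA3 : ∀ x ∈ Set.Ioo ym yp, 1 < deriv g x)
    (hB : g (b - 1) < b ∧ b < g b) :
    ∀ x : ℝ, ∃ m : ℕ, F^[m] x ∈ Set.Icc (b - 1) b := by
  classical
  obtain ⟨hb0, hb1⟩ := hb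
  have hgc : Continuous g := hg.continuous
  have mono_hi : StrictMonoOn g (Set.Ici yp) := by
    apply strictMonoOn_of_deriv_pos (convex_Ici yp) hgc.continuousOn
    intro z hz
    rw [interior_Ici] at hz
    exact (hA1 z (Or.inr hz)).1
  have mono_lo : StrictMonoOn g (Set.Iic ym) := by
    apply strictMonoOn_of_deriv_pos (convex_Iic ym) hgc.continuousOn
    intro z hz
    rw [interior_Iic] at hz
    exact (hA1 z (Or.inl hz)).1
  set δ : ℝ := g b - b with hδdef
  have hδ : 0 < δ := by simp [hδdef]; linarith [hB.2]
  set δ' : ℝ := b - g (b - 1) with hδ'def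
  have hδ' : 0 < δ' := by simp [hδ'def]; linarith [hB.1]
  -- step bounds
  have step_hi : ∀ z, b ≤ z → F z ≤ z - δ := by
    intro z hz
    have : g b ≤ g z := by
      rcases eq_or_lt_of_le hz with h | h
      · rw [h]
      · exact (mono_hi (Set.mem_Ici.2 hyp.le) (Set.mem_Ici.2 (hyp.le.trans hz)) h).le
    rw [hF]; simp [hδdef]; linarith
  have step_lo : ∀ z, z ≤ b - 1 → z + δ' ≤ F z := by
    intro z hz
    have : g z ≤ g (b - 1) := by
      rcases eq_or_lt_of_le hz with h | h
      · rw [h]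
      · exact (mono_lo (Set.mem_Iic.2 (hz.trans hym.le)) (Set.mem_Iic.2 hym.le) h).le
    rw [hF]; simp [hδ'def]; linarith
  intro x
  by_cases hxb : x ≤ b
  · by_cases hxb1 : b - 1 ≤ x
    · exact ⟨0, hxb1, hxb⟩
    · push_neg at hxb1
      have hex : ∃ m, b - 1 ≤ F^[m] x := by
        by_contra h
        push_neg at h
        have key : ∀ n : ℕ, x + n * δ' ≤ F^[n] x := by
          intro n
          induction n with
          | zero => simp
          | succ n ih =>
            have h1 : F^[n] x ≤ b - 1 := (h n).le
            have h2 := step_lo _ h1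
            rw [Function.iterate_succ_apply']
            push_cast
            nlinarith
        obtain ⟨n, hn⟩ := exists_nat_gt ((b - 1 - x) / δ')
        have h1 := key n
        have h2 := h n
        have h3 : b - 1 - x < n * δ' := (div_lt_iff₀ hδ').1 hn
        linarith
      set m := Nat.find hex with hmdef
      have hspec : b - 1 ≤ F^[m] x := Nat.find_spec hex
      have hm0 : m ≠ 0 := by
        intro h0
        rw [h0] at hspec
        simp at hspec
        linarith
      have hk : ¬ b - 1 ≤ F^[m-1] x := Nat.find_min hex (by omega)
      push_neg at hk
      have hit : F^[m] x = F (F^[m-1] x) := by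
        conv_lhs => rw [show m = (m-1) + 1 by omega]
        exact Function.iterate_succ_apply' F (m-1) x
      have hgpos := (hg01 (F^[m-1] x)).1
      refine ⟨m, hspec, ?_⟩
      rw [hit, hF]
      nlinarith
  · push_neg at hxb
    have hex : ∃ m, F^[m] x ≤ b := by
      by_contra h
      push_neg at h
      have key : ∀ n : ℕ, F^[n] x ≤ x - n * δ := by
        intro n
        induction n with
        | zero => simp
        | succ n ih =>
          have h1 : b ≤ F^[n] x := (h n).le
          have h2 := step_hi _ h1
          rw [Function.iterate_succ_apply']
          push_cast
          nlinarith
      obtain ⟨n, hn⟩ := exists_nat_gt ((x - b) / δ)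
      have h1 := key n
      have h2 := h n
      have h3 : x - b < n * δ := (div_lt_iff₀ hδ).1 hn
      linarith
    set m := Nat.find hex with hmdef
    have hspec : F^[m] x ≤ b := Nat.find_spec hex
    have hm0 : m ≠ 0 := by
      intro h0
      rw [h0] at hspec
      simp at hspec
      linarith
    have hk : ¬ F^[m-1] x ≤ b := Nat.find_min hex (by omega)
    push_neg at hk
    have hit : F^[m] x = F (F^[m-1] x) := by
      conv_lhs => rw [show m = (m-1) + 1 by omega]
      exact Function.iterate_succ_apply' F (m-1) x
    have hglt := (hg01 (F^[m-1] x)).2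
    refine ⟨m, ?_, hspec⟩
    rw [hit, hF]
    nlinarith
end

section
/- Let a > 4 and b ∈ (0,1), and let F be the EOS map F(x) = x + b − g(x) with g(x) = 1/(e^{−ax} + 1). Then F′(x) = 1 − a·t/(t+1)² where t = e^{−ax}, and F′(x) = 0 if and only if (e^{−ax} + 1)² = a·e^{−ax}. Moreover F has exactly two critical points y₋ < 0 < y₊, they satisfy y₋ = −y₊, and (1/a)·log(a−3) < y₊ < (1/a)·log(a−2). -/
theorem eos_critical_points (a b : ℝ) (ha : 4 < a) (hb : b ∈ Set.Ioo (0:ℝ) 1)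
    (g : ℝ → ℝ) (hg : ∀ x, g x = 1 / (Real.exp (-a * x) + 1))
    (F : ℝ → ℝ) (hF : ∀ x, F x = x + b - g x) :
    (∀ x : ℝ, deriv F x =
        1 - a * Real.exp (-a * x) / (Real.exp (-a * x) + 1) ^ 2) ∧
    (∀ x : ℝ, deriv F x = 0 ↔
        (Real.exp (-a * x) + 1) ^ 2 = a * Real.exp (-a * x)) ∧
    ∃ ym yp : ℝ, ym < 0 ∧ 0 < yp ∧
      (∀ x : ℝ, deriv F x = 0 ↔ (x = ym ∨ x = yp)) ∧
      ym = -yp ∧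
      (1 / a) * Real.log (a - 3) < yp ∧ yp < (1 / a) * Real.log (a - 2) := by
  have ha0 : (0:ℝ) < a := by linarith
  have hFeq : F = fun x => x + b - (Real.exp (-a * x) + 1)⁻¹ := by
    funext x; rw [hF x, hg x, one_div]
  -- derivative
  have hderiv : ∀ x : ℝ, deriv F x =
      1 - a * Real.exp (-a * x) / (Real.exp (-a * x) + 1) ^ 2 := by
    intro x
    have h1 : HasDerivAt (fun x : ℝ => -a * x) (-a) x := by
      simpa using (hasDerivAt_id x).const_mul (-a)
    have h2 := h1.exp
    have h3 := h2.add_const 1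
    have hpos : (0:ℝ) < Real.exp (-a * x) + 1 := by positivity
    have h4 := h3.inv hpos.ne'
    have h5 : HasDerivAt F
        (1 - -(Real.exp (-a * x) * -a) / (Real.exp (-a * x) + 1) ^ 2) x := by
      rw [hFeq]
      exact ((hasDerivAt_id x).add_const b).sub h4
    rw [h5.deriv]; ring
  refine ⟨hderiv, ?_, ?_⟩
  · intro x
    rw [hderiv x]
    have hpos : (0:ℝ) < (Real.exp (-a * x) + 1) ^ 2 := by positivity
    rw [sub_eq_zero, eq_comm, div_eq_one_iff_eq hpos.ne', eq_comm]
  · -- roots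
    set s : ℝ := Real.sqrt ((a - 2) ^ 2 - 4) with hs
    have hdisc : (0:ℝ) ≤ (a - 2) ^ 2 - 4 := by nlinarith
    have hs0 : 0 ≤ s := Real.sqrt_nonneg _
    have hs2 : s ^ 2 = (a - 2) ^ 2 - 4 := Real.sq_sqrt hdisc
    have hslb : a - 4 < s := by nlinarith
    have hsub : s < a - 2 := by nlinarith
    set u : ℝ := (a - 2 + s) / 2 with hu
    have hulb : a - 3 < u := by simp only [hu]; linarith
    have huub : u < a - 2 := by simp only [hu]; linarith
    have hu1 : 1 < u := by linarith
    have hu0 : 0 < u := by linarith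
    have hroot : u ^ 2 - (a - 2) * u + 1 = 0 := by
      simp only [hu]; nlinarith [hs2]
    clear_value u
    clear_value s
    have hu0' : u ≠ 0 := hu0.ne'
    have hinv : u⁻¹ = (a - 2) - u := by
      field_simp
      linear_combination hroot
    set yp : ℝ := (1 / a) * Real.log u with hyp
    refine ⟨-yp, yp, ?_, ?_, ?_, rfl, ?_, ?_⟩
    · have : 0 < Real.log u := Real.log_pos hu1
      have : 0 < yp := by positivity
      linarith
    · have : 0 < Real.log u := Real.log_pos hu1
      positivity
    · intro x
      rw [hderiv x]
      set e : ℝ := Real.exp (-a * x) with he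
      have hepos : 0 < e := Real.exp_pos _
      have hpos : (0:ℝ) < (e + 1) ^ 2 := by positivity
      have hexp_ym : Real.exp (-a * (-yp)) = u := by
        have : -a * (-yp) = Real.log u := by
          simp only [hyp]; field_simp
        rw [this, Real.exp_log hu0]
      have hexp_yp : Real.exp (-a * yp) = u⁻¹ := by
        have : -a * yp = -Real.log u := by
          simp only [hyp]; field_simp
        rw [this, Real.exp_neg, Real.exp_log hu0]
      have hquad : 1 - a * e / (e + 1) ^ 2 = 0 ↔ (e - u) * (e - u⁻¹) = 0 := by
        rw [sub_eq_zero, eq_comm, div_eq_one_iff_eq hpos.ne']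
        constructor
        · intro h; rw [hinv]; linear_combination -h - hroot
        · intro h; rw [hinv] at h; linear_combination -h - hroot
      rw [hquad, mul_eq_zero, sub_eq_zero, sub_eq_zero]
      have hinj : ∀ y : ℝ, e = Real.exp (-a * y) ↔ x = y := by
        intro y
        rw [he, Real.exp_eq_exp]
        constructor
        · intro h; exact mul_left_cancel₀ (by linarith : (-a) ≠ 0) h
        · intro h; rw [h]
      rw [← hexp_yp, ← hexp_ym, hinj, hinj]
    · have h1 : Real.log (a - 3) < Real.log u := Real.log_lt_log (by linarith) hulb
      have h2 : (0:ℝ) < 1 / a := by positivity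
      simp only [hyp]
      exact (mul_lt_mul_iff_right₀ h2).mpr h1
    · have h1 : Real.log u < Real.log (a - 2) := Real.log_lt_log hu0 huub
      have h2 : (0:ℝ) < 1 / a := by positivity
      simp only [hyp]
      exact (mul_lt_mul_iff_right₀ h2).mpr h1
end

section
/- Let a > 4 and b ∈ (0,1), and let F be the EOS map F(x) = x + b − g(x) with g(x) = 1/(e^{−ax} + 1). Let y₊ > 0 be the positive critical point of F (the point y₊ > 0 with F′(y₊) = 0). Then e^{a·y₊} ∈ (a−3, a−2), and 1/(a−1) < 1 − g(y₊) < 1/(a−2). -/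
theorem eos_correction_at_critical_point (a b : ℝ) (ha : 4 < a)
    (hb : b ∈ Set.Ioo (0:ℝ) 1)
    (g : ℝ → ℝ) (hg : ∀ x, g x = 1 / (Real.exp (-a * x) + 1))
    (F : ℝ → ℝ) (hF : ∀ x, F x = x + b - g x)
    (yp : ℝ) (hyp0 : 0 < yp) (hyp : deriv F yp = 0) :
    Real.exp (a * yp) ∈ Set.Ioo (a - 3) (a - 2) ∧
    1 / (a - 1) < 1 - g yp ∧ 1 - g yp < 1 / (a - 2) := by
  set u := Real.exp (-a * yp) with hu
  set v := Real.exp (a * yp) with hv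
  have hupos : 0 < u := Real.exp_pos _
  have hvpos : 0 < v := Real.exp_pos _
  have huv : u * v = 1 := by
    rw [hu, hv, ← Real.exp_add]
    rw [show -a * yp + a * yp = 0 by ring, Real.exp_zero]
  have hv1 : 1 < v := by
    rw [hv]
    have := Real.add_one_le_exp (a * yp)
    nlinarith [mul_pos (show (0:ℝ) < a by linarith) hyp0]
  have hune : u + 1 ≠ 0 := by positivity
  -- compute derivative
  have hF' : HasDerivAt F (1 - (a * u) / (u + 1) ^ 2) yp := by
    have h1 : HasDerivAt (fun x : ℝ => -a * x) (-a) yp := by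
      simpa using (hasDerivAt_id yp).const_mul (-a)
    have h2 : HasDerivAt (fun x : ℝ => Real.exp (-a * x) + 1) (u * -a) yp :=
      (h1.exp).add_const 1
    have h3 : HasDerivAt (fun x : ℝ => (Real.exp (-a * x) + 1)⁻¹)
        (-(u * -a) / (u + 1) ^ 2) yp := h2.inv hune
    have h4 : HasDerivAt F (1 - -(u * -a) / (u + 1) ^ 2) yp := by
      have h5 : HasDerivAt (fun x : ℝ => x + b - (Real.exp (-a * x) + 1)⁻¹)
          (1 - -(u * -a) / (u + 1) ^ 2) yp :=
        ((hasDerivAt_id yp).add_const b).sub h3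
      have : F = fun x : ℝ => x + b - (Real.exp (-a * x) + 1)⁻¹ := by
        funext x; rw [hF x, hg x, one_div]
      rw [this]; exact h5
    convert h4 using 1; ring
  have key : a * u = (u + 1) ^ 2 := by
    have := hF'.deriv
    rw [hyp] at this
    have h2 : (a * u) / (u + 1) ^ 2 = 1 := by linarith
    field_simp at h2
    linarith
  have keyv : a * v = (v + 1) ^ 2 := by nlinarith [key, huv, sq_nonneg v]
  have hlt : v < a - 2 := by nlinarith
  have hgt : a - 3 < v := by nlinarith [mul_pos (sub_pos.mpr hv1) hvpos]
  refine ⟨⟨hgt, hlt⟩, ?_, ?_⟩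
  · have hval : 1 - g yp = 1 / (v + 1) := by
      rw [hg]
      have hu' : u = 1 / v := by field_simp; linarith [huv]
      rw [← hu, hu']
      field_simp
      ring
    rw [hval]
    rw [div_lt_div_iff₀ (by linarith) (by linarith)]
    linarith
  · have hval : 1 - g yp = 1 / (v + 1) := by
      rw [hg]
      have hu' : u = 1 / v := by field_simp; linarith [huv]
      rw [← hu, hu']
      field_simp
      ring
    rw [hval]
    rw [div_lt_div_iff₀ (by linarith) (by linarith)]
    linarith
end

section
/- Let a > 0 and b ∈ (0,1), let F be the EOS map F(x) = x + b − 1/(e^{−ax} + 1), let f_MW : (0,1) → (0,1) be given by f_MW(y) = y/(y + (1−y)·exp(a(y−b))), and let h : (0,1) → ℝ be given by h(y) = (1/a)·log(y/(1−y)). Then f_MW maps (0,1) into (0,1), h is a bijection from (0,1) onto ℝ, and F(h(y)) = h(f_MW(y)) for every y ∈ (0,1); that is, F is conjugate to f_MW via h. -/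
/-!
Write `logit y = log (y / (1 - y))`, the inverse of the logistic function `sigmoid` on `(0, 1)`, so
that `h = a⁻¹ · logit`. Then `1 / (exp (-a x) + 1) = sigmoid (a x)`, hence `F (h y) = h y + b - y`.
On the other side, `f_MW y = sigmoid (logit y - a (y - b))`: multiplicative weights shift the
log-odds by `-a (y - b)`, so `h (f_MW y) = h y - (y - b)` as well.
-/

open Real Set

noncomputable def logit (y : ℝ) : ℝ := log (y / (1 - y))

lemma exp_logit {y : ℝ} (hy : y ∈ Ioo 0 1) : exp (logit y) = y / (1 - y) :=
  exp_log (div_pos hy.1 (sub_pos.2 hy.2))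

lemma sigmoid_logit {y : ℝ} (hy : y ∈ Ioo 0 1) : sigmoid (logit y) = y := by
  have hy0 : y ≠ 0 := hy.1.ne'
  rw [sigmoid_def, exp_neg, exp_logit hy, inv_div,
    show 1 + (1 - y) / y = y⁻¹ by field_simp; ring, inv_inv]

lemma logit_sigmoid (x : ℝ) : logit (sigmoid x) = x := by
  rw [logit, ← sigmoid_neg, ← sigmoid_mul_rexp_neg, div_mul_cancel_left₀ (sigmoid_pos x).ne',
    ← exp_neg, neg_neg, log_exp]

lemma bijOn_const_mul_logit {c : ℝ} (hc : c ≠ 0) :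
    BijOn (fun y ↦ c * logit y) (Ioo 0 1) univ := by
  refine InvOn.bijOn (f' := fun x ↦ sigmoid (x / c)) ⟨fun y hy ↦ ?_, fun x _ ↦ ?_⟩
    (mapsTo_univ _ _) fun x _ ↦ ⟨sigmoid_pos _, sigmoid_lt_one _⟩
  · simp only [mul_div_cancel_left₀ _ hc, sigmoid_logit hy]
  · simp only [logit_sigmoid, mul_div_cancel₀ _ hc]

lemma div_add_one_sub_mul_exp {y : ℝ} (hy : y ∈ Ioo 0 1) (c : ℝ) :
    y / (y + (1 - y) * exp c) = sigmoid (logit y - c) := by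
  have hy0 : y ≠ 0 := hy.1.ne'
  have h1y : 1 - y ≠ 0 := (sub_pos.2 hy.2).ne'
  rw [sigmoid_def, neg_sub, exp_sub, exp_logit hy]
  field_simp

theorem eos_conjugate_to_mw_general (a b : ℝ) (ha : 0 < a)
    (F : ℝ → ℝ) (hF : ∀ x, F x = x + b - 1 / (Real.exp (-a * x) + 1))
    (fMW : ℝ → ℝ)
    (hfMW : ∀ y, fMW y = y / (y + (1 - y) * Real.exp (a * (y - b))))
    (h : ℝ → ℝ) (hh : ∀ y, h y = (1 / a) * Real.log (y / (1 - y))) :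
    Set.MapsTo fMW (Set.Ioo (0:ℝ) 1) (Set.Ioo (0:ℝ) 1) ∧
    Set.BijOn h (Set.Ioo (0:ℝ) 1) Set.univ ∧
    ∀ y ∈ Set.Ioo (0:ℝ) 1, F (h y) = h (fMW y) := by
  have hh' : ∀ y, h y = (1 / a) * logit y := hh
  have hfMW' : ∀ y ∈ Ioo (0:ℝ) 1, fMW y = sigmoid (logit y - a * (y - b)) := fun y hy ↦ by
    rw [hfMW, div_add_one_sub_mul_exp hy]
  have hF' : ∀ x, F x = x + b - sigmoid (a * x) := fun x ↦ by
    rw [hF, sigmoid_def, one_div, add_comm (exp _), neg_mul]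
  refine ⟨fun y hy ↦ ?_, ?_, fun y hy ↦ ?_⟩
  · rw [hfMW' y hy]
    exact ⟨sigmoid_pos _, sigmoid_lt_one _⟩
  · exact (funext hh' : h = _) ▸ bijOn_const_mul_logit (one_div_ne_zero ha.ne')
  · rw [hF', hfMW' y hy, hh', hh', one_div, mul_inv_cancel_left₀ ha.ne', sigmoid_logit hy,
      logit_sigmoid]
    field_simp
    ring

theorem eos_conjugate_to_mw (a b : ℝ) (ha : 0 < a) (hb : b ∈ Set.Ioo (0:ℝ) 1)
    (F : ℝ → ℝ) (hF : ∀ x, F x = x + b - 1 / (Real.exp (-a * x) + 1))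
    (fMW : ℝ → ℝ)
    (hfMW : ∀ y, fMW y = y / (y + (1 - y) * Real.exp (a * (y - b))))
    (h : ℝ → ℝ) (hh : ∀ y, h y = (1 / a) * Real.log (y / (1 - y))) :
    Set.MapsTo fMW (Set.Ioo (0:ℝ) 1) (Set.Ioo (0:ℝ) 1) ∧
    Set.BijOn h (Set.Ioo (0:ℝ) 1) Set.univ ∧
    ∀ y ∈ Set.Ioo (0:ℝ) 1, F (h y) = h (fMW y) :=
  eos_conjugate_to_mw_general a b ha F hF fMW hfMW h hh
end
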